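/- In the Petersen graph, every two distinct vertices have distance at most two, and every two nonadjacent vertices s,t are linked: there are two induced paths between s and t, both of length at least three, whose lengths have different parity. -/

import Mathlib

open SimpleGraph

variable {V : Type*}

/-- A walk is an *induced (chordless) path* if it is a path and every edge of `G` joining
two of its vertices is an edge of the path. -/
def IsIndPath (G : SimpleGraph V) {u v : V} (p : G.Walk u v) : Prop :=
  p.IsPath ∧ ∀ x ∈ p.support, ∀ y ∈ p.support, G.Adj x y → s(x, y) ∈ p.edges

/-- The interior (set of internal vertices) of a walk from `u` to `v`. -/
def interiorSet {G : SimpleGraph V} {u v : V} (p : G.Walk u v) : Set V :=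
  {x | x ∈ p.support ∧ x ≠ u ∧ x ≠ v}

/-- An *induced cycle*: a cycle such that every edge of `G` joining two of its vertices is an
edge of the cycle. -/
def IsIndCycle (G : SimpleGraph V) {u : V} (c : G.Walk u u) : Prop :=
  c.IsCycle ∧ ∀ x ∈ c.support, ∀ y ∈ c.support, G.Adj x y → s(x, y) ∈ c.edges

/-- A *pentagraph*: every cycle has length at least five, and every induced cycle of odd
length has length exactly five. -/
def IsPentagraph (G : SimpleGraph V) : Prop :=
  (∀ (u : V) (c : G.Walk u u), c.IsCycle → 5 ≤ c.length) ∧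
  (∀ (u : V) (c : G.Walk u u), IsIndCycle G c → Odd c.length → c.length = 5)

/-- Removing the vertex set `X` disconnects `G`: two vertices outside `X` are not joined by
any path avoiding `X`. -/
def RemovalDisconnects (G : SimpleGraph V) (X : Set V) : Prop :=
  ∃ a b : ↥(Xᶜ), ¬ (G.induce Xᶜ).Reachable a b

/-- `G` admits a `P₃`-cutset: an induced three-vertex path whose deletion disconnects `G`. -/
def HasP3Cutset (G : SimpleGraph V) : Prop :=
  ∃ v₁ v₂ v₃ : V, G.Adj v₁ v₂ ∧ G.Adj v₂ v₃ ∧ ¬ G.Adj v₁ v₃ ∧ v₁ ≠ v₃ ∧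
    RemovalDisconnects G ({v₁, v₂, v₃} : Set V)

/-- `A` is (the vertex set of) a connected component of `G ∖ X`. -/
def IsCompOf (G : SimpleGraph V) (X : Set V) (A : Set V) : Prop :=
  A.Nonempty ∧ A ⊆ Xᶜ ∧ (G.induce A).Connected ∧
    ∀ u ∈ A, ∀ w ∈ Xᶜ, G.Adj u w → w ∈ A

/-- `G` admits a strong parity star-cutset. -/
def HasStrongParityStarCutset (G : SimpleGraph V) : Prop :=
  ∃ X : Set V, RemovalDisconnects G X ∧
    ∃ x ∈ X, (∀ y ∈ X, y ≠ x → G.Adj x y) ∧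
      ∃ A : Set V, IsCompOf G X A ∧
        (∀ y ∈ X, y ≠ x → ∀ z ∈ X, z ≠ x → y ≠ z →
          ∃ p : G.Walk y z, IsIndPath G p ∧ Even p.length ∧ interiorSet p ⊆ A) ∧
        (∃ a ∈ A, G.Adj x a)

/-- `G` admits a clique cutset. -/
def HasCliqueCutset (G : SimpleGraph V) : Prop :=
  ∃ X : Set V, G.IsClique X ∧ RemovalDisconnects G X

/-- Vertices of the Petersen graph: 2-element subsets of a 5-element set. -/
abbrev KVert : Type := {s : Finset (Fin 5) // s.card = 2}

/-- The Petersen graph, as the Kneser graph on 2-element subsets of a 5-element set. -/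
def petersen : SimpleGraph KVert where
  Adj a b := Disjoint (a : Finset (Fin 5)) (b : Finset (Fin 5))
  symm := ⟨fun a b h => h.symm⟩
  loopless := by
    refine ⟨fun a h => ?_⟩
    have h : Disjoint (a : Finset (Fin 5)) (a : Finset (Fin 5)) := h
    rw [disjoint_self] at h
    have h2 := a.2
    simp [h] at h2

def pA : KVert := ⟨{0, 1}, by decide⟩
def pB : KVert := ⟨{2, 3}, by decide⟩

/-- The Petersen graph minus one edge. -/
def petersen0 : SimpleGraph KVert := petersen.deleteEdges {s(pA, pB)}

/-- The Petersen graph minus one vertex. -/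
def petersen1 : SimpleGraph {x : KVert // x ≠ pA} := petersen.induce {x : KVert | x ≠ pA}

/-- The Petersen graph minus two adjacent vertices. -/
def petersen2 : SimpleGraph {x : KVert // x ≠ pA ∧ x ≠ pB} :=
  petersen.induce {x : KVert | x ≠ pA ∧ x ≠ pB}

/-- Two nonadjacent vertices are *linked*: joined by two induced paths, both of length at
least three, of different parity. -/
def Linked (H : SimpleGraph V) (s t : V) : Prop :=
  ∃ (p q : H.Walk s t), IsIndPath H p ∧ IsIndPath H q ∧
    3 ≤ p.length ∧ 3 ≤ q.length ∧ p.length % 2 ≠ q.length % 2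

/-- Two vertices are *odd-linked*: joined by an induced path of odd length at least five. -/
def OddLinked (H : SimpleGraph V) (s t : V) : Prop :=
  ∃ p : H.Walk s t, IsIndPath H p ∧ Odd p.length ∧ 5 ≤ p.length

/-- A *jump* over a hole with vertex set `C`: an induced path whose ends are distinct,
nonadjacent vertices of `C` and whose other vertices avoid `C`. -/
def IsJump (G : SimpleGraph V) (C : Set V) {s t : V} (P : G.Walk s t) : Prop :=
  IsIndPath G P ∧ s ∈ C ∧ t ∈ C ∧ s ≠ t ∧ ¬ G.Adj s t ∧
    ∀ x ∈ P.support, x ∈ C → x = s ∨ x = t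

/-- A jump *across* the vertex `c` of `C`. -/
def IsJumpAcross (G : SimpleGraph V) (C : Set V) {s t : V} (P : G.Walk s t) (c : V) : Prop :=
  IsJump G C P ∧ c ∈ C ∧ G.Adj c s ∧ G.Adj c t

/-- A *local* jump: no vertex of `C` other than `c, s, t` has a neighbour in the interior. -/
def IsLocalJump (G : SimpleGraph V) (C : Set V) {s t : V} (P : G.Walk s t) : Prop :=
  IsJump G C P ∧ ∃ c : V, c ∈ C ∧ G.Adj c s ∧ G.Adj c t ∧
    ∀ x ∈ C, x ≠ c → x ≠ s → x ≠ t → ∀ y ∈ interiorSet P, ¬ G.Adj x y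

/-- A *short* jump: a jump of length three. -/
def IsShortJump (G : SimpleGraph V) (C : Set V) {s t : V} (P : G.Walk s t) : Prop :=
  IsJump G C P ∧ P.length = 3

/-- `G` is three-connected. -/
def ThreeConnected (G : SimpleGraph V) : Prop :=
  4 ≤ Nat.card V ∧ ∀ S : Set V, S.ncard < 3 → (G.induce Sᶜ).Connected


/-! Permuting the ground set `Fin 5` is an automorphism of the Petersen graph, and these
automorphisms act transitively on ordered pairs of distinct nonadjacent vertices (2-sets meeting
in exactly one point). So for such pairs it suffices to look at `{0, 1}`, `{0, 2}`, which have
the common neighbour `{3, 4}` and are joined by the induced paths `{0,1} {2,3} {1,4} {0,2}` and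
`{0,1} {2,3} {0,4} {1,3} {0,2}` of lengths 3 and 4. -/

section InducedPaths

variable {W : Type*} {G : SimpleGraph V} {G' : SimpleGraph W} (f : G ↪g G')

theorem IsIndPath.map {u v : V} {p : G.Walk u v} (hp : IsIndPath G p) :
    IsIndPath G' (p.map f.toHom) := by
  refine ⟨hp.1.map f.injective, ?_⟩
  simp only [Walk.support_map, Walk.edges_map, List.mem_map]
  rintro _ ⟨x, hx, rfl⟩ _ ⟨y, hy, rfl⟩ hxy
  exact ⟨s(x, y), hp.2 x hx y hy (f.map_adj_iff.1 hxy), rfl⟩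

theorem Linked.map {s t : V} (h : Linked G s t) : Linked G' (f s) (f t) := by
  obtain ⟨p, q, hp, hq, hp3, hq3, hpq⟩ := h
  exact ⟨p.map f.toHom, q.map f.toHom, hp.map f, hq.map f, by simpa using hp3,
    by simpa using hq3, by simpa using hpq⟩

end InducedPaths

theorem Finset.exists_eq_pair_of_mem {α : Type*} [DecidableEq α] {s : Finset α} {b : α}
    (hs : s.card = 2) (hb : b ∈ s) : ∃ a, a ≠ b ∧ s = {b, a} := by
  have hcard : (s.erase b).card = 1 := by rw [Finset.card_erase_of_mem hb, hs]
  obtain ⟨a, ha⟩ := Finset.card_eq_one.1 hcard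
  refine ⟨a, fun hab => ?_, ?_⟩
  · simpa [hab] using (ha ▸ Finset.mem_singleton_self a : a ∈ s.erase b)
  · rw [← Finset.insert_erase hb, ha]

instance : DecidableRel petersen.Adj := fun a b =>
  inferInstanceAs (Decidable (Disjoint (a : Finset (Fin 5)) b))

def petersenIsoOfPerm (σ : Equiv.Perm (Fin 5)) : petersen ≃g petersen where
  toEquiv := σ.finsetCongr.subtypeEquiv fun s => by simp
  map_rel_iff' := by simp [petersen, Finset.disjoint_map]

@[simp]
theorem coe_petersenIsoOfPerm_apply (σ : Equiv.Perm (Fin 5)) (s : KVert) :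
    (petersenIsoOfPerm σ s : Finset (Fin 5)) = (s : Finset (Fin 5)).map σ.toEmbedding :=
  rfl

def pC : KVert := ⟨{0, 2}, rfl⟩

theorem petersen_exists_iso_of_not_adj {s t : KVert} (hst : s ≠ t) (h : ¬ petersen.Adj s t) :
    ∃ φ : petersen ≃g petersen, φ pA = s ∧ φ pC = t := by
  obtain ⟨b, hbs, hbt⟩ := Finset.not_disjoint_iff.1 h
  obtain ⟨a, hab, hs⟩ := Finset.exists_eq_pair_of_mem s.2 hbs
  obtain ⟨c, hcb, ht⟩ := Finset.exists_eq_pair_of_mem t.2 hbt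
  have hac : a ≠ c := by
    rintro rfl
    exact hst (Subtype.ext (hs.trans ht.symm))
  obtain ⟨σ, hσ⟩ := Equiv.Perm.exists_extending_pair ![0, 1, 2] ![b, a, c] (by decide)
    (by simp [Function.Injective, Fin.forall_fin_succ, hab, hac, hcb, hab.symm, hac.symm,
      hcb.symm])
  obtain ⟨h0, h1, h2⟩ : σ 0 = b ∧ σ 1 = a ∧ σ 2 = c := ⟨hσ 0, hσ 1, hσ 2⟩
  refine ⟨petersenIsoOfPerm σ, Subtype.ext ?_, Subtype.ext ?_⟩
  · simp [pA, hs, h0, h1]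
  · simp [pC, ht, h0, h2]

theorem petersen_exists_common_adj_pA_pC : ∃ w, petersen.Adj pA w ∧ petersen.Adj w pC :=
  ⟨⟨{3, 4}, rfl⟩, by decide, by decide⟩

theorem petersen_linked_pA_pC : Linked petersen pA pC := by
  let p : petersen.Walk pA pC :=
    .cons (v := ⟨{2, 3}, rfl⟩) (by decide) <| .cons (v := ⟨{1, 4}, rfl⟩) (by decide) <|
      .cons (by decide) .nil
  let q : petersen.Walk pA pC :=
    .cons (v := ⟨{2, 3}, rfl⟩) (by decide) <| .cons (v := ⟨{0, 4}, rfl⟩) (by decide) <|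
      .cons (v := ⟨{1, 3}, rfl⟩) (by decide) <| .cons (by decide) .nil
  -- The `Decidable` instance of `Walk.IsPath` does not reduce, so decide `support.Nodup` instead.
  refine ⟨p, q, ?_, ?_, by decide, by decide, by decide⟩ <;>
    exact ⟨(Walk.isPath_def _).2 (by decide), by decide⟩

theorem petersen_exists_common_adj {s t : KVert} (hst : s ≠ t) (h : ¬ petersen.Adj s t) :
    ∃ w, petersen.Adj s w ∧ petersen.Adj w t := by
  obtain ⟨φ, rfl, rfl⟩ := petersen_exists_iso_of_not_adj hst h
  obtain ⟨w, hAw, hwC⟩ := petersen_exists_common_adj_pA_pC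
  exact ⟨φ w, φ.map_adj_iff.2 hAw, φ.map_adj_iff.2 hwC⟩

/-- in the Petersen graph, all distances are at most two and every two
nonadjacent vertices are linked. -/
theorem petersen_distances_and_linked :
    (∀ s t : KVert, s ≠ t → petersen.dist s t ≤ 2) ∧
    (∀ s t : KVert, s ≠ t → ¬ petersen.Adj s t → Linked petersen s t) := by
  refine ⟨fun s t hst => ?_, fun s t hst hadj => ?_⟩
  · by_cases hadj : petersen.Adj s t
    · rw [dist_eq_one_iff_adj.2 hadj]
      norm_num
    · obtain ⟨w, hsw, hwt⟩ := petersen_exists_common_adj hst hadj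
      exact dist_le (hsw.toWalk.append hwt.toWalk)
  · obtain ⟨φ, rfl, rfl⟩ := petersen_exists_iso_of_not_adj hst hadj
    exact petersen_linked_pA_pC.map φ.toEmbedding
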